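/- Let V be a finite set and A = {A_1,…,A_k} a Sperner family of subsets of V with ⋃_{i=1}^k A_i = V and |A_i| > 1 for all i, let τ(A) = {T_1,…,T_m} be the set of minimal transversals of A, and let G_A be the graph with vertex set V ∪ {t_1,…,t_m} whose edges are all pairs of distinct vertices of V together with, for each i, the edges joining t_i to exactly the vertices of T_i. Then, over a field k, the open neighborhood ideal satisfies N(G_A) = ⟨X_{T_1},…,X_{T_m}⟩, and {X_{T_1},…,X_{T_m}} is a minimal generating set: no X_{T_i} lies in the ideal generated by the other X_{T_j}. -/

import Mathlib

open scoped Classical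

section GraphDefs

variable {V : Type} (G : SimpleGraph V)

/-- A leaf is a vertex of degree 1. -/
def IsLeafVx (v : V) : Prop := (G.neighborSet v).ncard = 1

/-- The height of a vertex: the minimum distance to a leaf in its connected
component (`0` if there is no leaf reachable from it, e.g. for isolated vertices). -/
noncomputable def heightVx (v : V) : ℕ :=
  sInf {n | ∃ l, IsLeafVx G l ∧ G.Reachable v l ∧ G.dist v l = n}

/-- The height of a graph: the maximum height of a vertex. -/
noncomputable def heightGr : ℕ := sSup (Set.range (heightVx G))

/-- A graph is balanced if no two adjacent vertices have the same height. -/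
def IsBalanced : Prop := ∀ u w, G.Adj u w → heightVx G u ≠ heightVx G w

/-- The open neighborhood of a set of vertices. -/
def nbhd (S : Set V) : Set V := {u | ∃ v ∈ S, G.Adj v u}

/-- A total dominating set: `N(S) = V`. -/
def IsTDSet (S : Set V) : Prop := nbhd G S = Set.univ

/-- A minimal total dominating set. -/
def IsMinTDSet (S : Set V) : Prop := IsTDSet G S ∧ ∀ S' ⊂ S, ¬ IsTDSet G S'

/-- A graph is TD-unmixed if all of its minimal total dominating sets have
the same cardinality. -/
def TDUnmixed : Prop :=
  ∀ S₁ S₂ : Set V, IsMinTDSet G S₁ → IsMinTDSet G S₂ → S₁.ncard = S₂.ncard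

/-- A forest is TD-unmixed if every connected component is TD-unmixed. -/
def ComponentwiseTDUnmixed : Prop :=
  ∀ c : G.ConnectedComponent, TDUnmixed (G.induce c.supp)

end GraphDefs

section MonomialDefs

/-- The squarefree monomial `X_S = ∏_{v ∈ S} x_v` with support the (finite) set `S`
(`X_∅ = 1`; junk value `1` for infinite `S`). -/
noncomputable def XS (k : Type) [Field k] {σ : Type} (S : Set σ) : MvPolynomial σ k :=
  ∏ᶠ v ∈ S, MvPolynomial.X v

/-- The open neighborhood ideal of a graph `G`: generated by the monomials `X_{N(v)}`
for all vertices `v`. -/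
noncomputable def ONIset (k : Type) [Field k] {V : Type} (G : SimpleGraph V) :
    Ideal (MvPolynomial V k) :=
  Ideal.span {m | ∃ v : V, m = XS k (G.neighborSet v)}

end MonomialDefs

section TransversalDefs

variable {V : Type}

/-- A Sperner family: no member contains another. -/
def IsSperner (𝒜 : Set (Set V)) : Prop := ∀ A ∈ 𝒜, ∀ B ∈ 𝒜, A ⊆ B → A = B

/-- A transversal of a family of sets: a set meeting every member. -/
def IsTransversal (𝒜 : Set (Set V)) (T : Set V) : Prop := ∀ A ∈ 𝒜, (T ∩ A).Nonempty

/-- A minimal transversal. -/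
def IsMinTransversal (𝒜 : Set (Set V)) (T : Set V) : Prop :=
  IsTransversal 𝒜 T ∧ ∀ T' ⊂ T, ¬ IsTransversal 𝒜 T'

/-- The graph `G_𝒜` of Construction 6.4 (Bahadır–Ekim–Gözüpek): vertices are the
elements of `V` together with one new vertex `t_T` for each minimal transversal `T` of
`𝒜`; all pairs of distinct vertices of `V` are adjacent, and each `t_T` is adjacent to
exactly the vertices of `T`. -/
def GA (𝒜 : Set (Set V)) :
    SimpleGraph (V ⊕ {T : Set V // IsMinTransversal 𝒜 T}) where
  Adj a b :=
    match a, b with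
    | Sum.inl u, Sum.inl v => u ≠ v
    | Sum.inl u, Sum.inr t => u ∈ t.1
    | Sum.inr t, Sum.inl u => u ∈ t.1
    | Sum.inr _, Sum.inr _ => False
  symm := by
    constructor
    rintro (u | t) (v | s) h
    · exact h.symm
    · exact h
    · exact h
    · exact h.elim
  loopless := by
    constructor
    rintro (u | t) h
    · exact h rfl
    · exact h

/-!
For `v ∈ V` the neighbourhood of `v` in `G_𝒜` contains `V ∖ {v}`, which is a transversal because
every member of `𝒜` has two elements; so `X_{N(v)}` is a multiple of `X_T` for a minimal
transversal `T ⊆ V ∖ {v}`, while `N(t_T) = T`. Minimality of the generating set comes from the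
fact that a squarefree monomial `X_T` lies in an ideal spanned by squarefree monomials `X_S` only
if some `S ⊆ T`, and minimal transversals are pairwise incomparable.
-/

section Monomials

open MvPolynomial

variable {k : Type} [Field k] {σ : Type} {S T : Set σ}

theorem XS_dvd_XS_of_subset (hST : S ⊆ T) (hT : T.Finite) : XS k S ∣ XS k T :=
  ⟨XS k (T \ S), (finprod_mem_mul_sdiff hST hT).symm⟩

theorem XS_ne_zero (hT : T.Finite) : XS k T ≠ 0 := by
  rw [XS, finprod_mem_eq_finite_toFinset_prod _ hT]
  exact Finset.prod_ne_zero_iff.mpr fun v _ => X_ne_zero v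

theorem aeval_indicator_X_XS_of_subset (hST : S ⊆ T) (hS : S.Finite) :
    aeval (T.indicator (X : σ → MvPolynomial σ k)) (XS k S) = XS k S := by
  rw [XS, ← AlgHom.coe_toMonoidHom, MonoidHom.map_finprod_mem _ _ hS]
  exact finprod_mem_congr rfl fun v hv => by simp [Set.indicator_of_mem (hST hv)]

theorem aeval_indicator_X_XS_of_not_subset (hST : ¬ S ⊆ T) (hS : S.Finite) :
    aeval (T.indicator (X : σ → MvPolynomial σ k)) (XS k S) = 0 := by
  obtain ⟨v, hvS, hvT⟩ := Set.not_subset.mp hST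
  rw [XS, ← AlgHom.coe_toMonoidHom, MonoidHom.map_finprod_mem _ _ hS,
    finprod_mem_eq_finite_toFinset_prod _ hS]
  exact Finset.prod_eq_zero (hS.mem_toFinset.mpr hvS) (by simp [Set.indicator_of_notMem hvT])

/-- Setting the variables outside `T` to zero kills every generator not supported in `T`,
but not `X_T`. -/
theorem exists_subset_of_XS_mem_span_image {𝒮 : Set (Set σ)} (h𝒮 : ∀ S ∈ 𝒮, S.Finite)
    (hT : T.Finite) (hmem : XS k T ∈ Ideal.span (XS k '' 𝒮)) : ∃ S ∈ 𝒮, S ⊆ T := by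
  by_contra! h
  have hker :
      Ideal.span (XS k '' 𝒮) ≤ RingHom.ker (aeval (T.indicator (X : σ → MvPolynomial σ k))) := by
    rw [Ideal.span_le]
    rintro _ ⟨S, hS, rfl⟩
    exact aeval_indicator_X_XS_of_not_subset (h S hS) (h𝒮 S hS)
  have hXT := RingHom.mem_ker.mp (hker hmem)
  rw [aeval_indicator_X_XS_of_subset subset_rfl hT] at hXT
  exact XS_ne_zero hT hXT

end Monomials

section Transversal

variable {V : Type} {𝒜 : Set (Set V)}

theorem IsTransversal.exists_isMinTransversal_subset [Finite V] {T : Set V}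
    (hT : IsTransversal 𝒜 T) : ∃ T₀ ⊆ T, IsMinTransversal 𝒜 T₀ := by
  obtain ⟨m, ⟨hmT, hm⟩, hmin⟩ := WellFounded.has_min wellFounded_lt
    {S | S ⊆ T ∧ IsTransversal 𝒜 S} ⟨T, subset_rfl, hT⟩
  exact ⟨m, hmT, hm, fun S hSm hS => hmin S ⟨hSm.subset.trans hmT, hS⟩ hSm⟩

theorem isTransversal_compl_singleton (hbig : ∀ A ∈ 𝒜, 1 < A.ncard) (u : V) :
    IsTransversal 𝒜 {u}ᶜ := fun A hA =>
  let ⟨v, hvA, hvu⟩ := Set.exists_ne_of_one_lt_ncard (hbig A hA) u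
  ⟨v, hvu, hvA⟩

theorem GA_neighborSet_inr (t : {T : Set V // IsMinTransversal 𝒜 T}) :
    (GA 𝒜).neighborSet (Sum.inr t) = Sum.inl '' t.1 := by
  ext (v | s) <;> simp [GA]

theorem image_inl_subset_GA_neighborSet_inl {T : Set V} {u : V} (hu : u ∉ T) :
    Sum.inl '' T ⊆ (GA 𝒜).neighborSet (Sum.inl u) := by
  rintro _ ⟨v, hv, rfl⟩
  exact fun huv => hu (huv ▸ hv)

end Transversal

theorem ONI_of_GA_minimal_generators_general (k : Type) [Field k] {V : Type} [Fintype V]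
    (𝒜 : Set (Set V)) (hbig : ∀ A ∈ 𝒜, 1 < A.ncard) :
    ONIset k (GA 𝒜)
      = Ideal.span {m | ∃ t : {T : Set V // IsMinTransversal 𝒜 T},
          m = XS k (Sum.inl '' t.1 :
            Set (V ⊕ {T : Set V // IsMinTransversal 𝒜 T}))} ∧
    ∀ t : {T : Set V // IsMinTransversal 𝒜 T},
      XS k (Sum.inl '' t.1 : Set (V ⊕ {T : Set V // IsMinTransversal 𝒜 T}))
        ∉ Ideal.span {m | ∃ s : {T : Set V // IsMinTransversal 𝒜 T}, s ≠ t ∧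
            m = XS k (Sum.inl '' s.1 :
              Set (V ⊕ {T : Set V // IsMinTransversal 𝒜 T}))} := by
  refine ⟨le_antisymm ?_ ?_, fun t hmem => ?_⟩
  · rw [ONIset, Ideal.span_le]
    rintro _ ⟨v | t, rfl⟩
    · obtain ⟨T, hTu, hT⟩ := (isTransversal_compl_singleton hbig v).exists_isMinTransversal_subset
      refine Ideal.mem_of_dvd _ (XS_dvd_XS_of_subset ?_ (Set.toFinite _))
        (Ideal.subset_span ⟨⟨T, hT⟩, rfl⟩)
      exact image_inl_subset_GA_neighborSet_inl fun huT => hTu huT rfl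
    · exact Ideal.subset_span ⟨t, by rw [GA_neighborSet_inr]⟩
  · rw [Ideal.span_le]
    rintro _ ⟨t, rfl⟩
    exact Ideal.subset_span ⟨Sum.inr t, by rw [GA_neighborSet_inr]⟩
  · have hgen : {m | ∃ s : {T : Set V // IsMinTransversal 𝒜 T}, s ≠ t ∧
        m = XS k (Sum.inl '' s.1 : Set (V ⊕ {T : Set V // IsMinTransversal 𝒜 T}))} =
        XS k '' {S | ∃ s : {T : Set V // IsMinTransversal 𝒜 T}, s ≠ t ∧ S = Sum.inl '' s.1} := by
      ext; simp [eq_comm]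
    rw [hgen] at hmem
    obtain ⟨_, ⟨s, hst, rfl⟩, hsub⟩ :=
      exists_subset_of_XS_mem_span_image (fun _ _ => Set.toFinite _) (Set.toFinite _) hmem
    have hssub : s.1 ⊂ t.1 := (Set.image_subset_image_iff Sum.inl_injective).mp hsub
      |>.ssubset_of_ne fun h => hst (Subtype.ext h)
    exact t.2.2 s.1 hssub s.2.1

/-- **Lemma** (minimal generators of `N(G_𝒜)`): in the setting of the
Bahadır–Ekim–Gözüpek construction, the open neighborhood ideal of `G_𝒜` is generated by
the monomials `X_{T}` for the minimal transversals `T` of `𝒜`, and these form a minimal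
generating set. -/
theorem ONI_of_GA_minimal_generators (k : Type) [Field k] {V : Type} [Fintype V]
    (𝒜 : Set (Set V)) (hsp : IsSperner 𝒜) (hcov : ⋃₀ 𝒜 = Set.univ)
    (hbig : ∀ A ∈ 𝒜, 1 < A.ncard) :
    ONIset k (GA 𝒜)
      = Ideal.span {m | ∃ t : {T : Set V // IsMinTransversal 𝒜 T},
          m = XS k (Sum.inl '' t.1 :
            Set (V ⊕ {T : Set V // IsMinTransversal 𝒜 T}))} ∧
    ∀ t : {T : Set V // IsMinTransversal 𝒜 T},
      XS k (Sum.inl '' t.1 : Set (V ⊕ {T : Set V // IsMinTransversal 𝒜 T}))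
        ∉ Ideal.span {m | ∃ s : {T : Set V // IsMinTransversal 𝒜 T}, s ≠ t ∧
            m = XS k (Sum.inl '' s.1 :
              Set (V ⊕ {T : Set V // IsMinTransversal 𝒜 T}))} :=
  ONI_of_GA_minimal_generators_general k 𝒜 hbig
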